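/- arXiv:2211.11466 — 5 statements merged into one kernel-verified Lean document; each statement's English description precedes it below -/
import Mathlib

section
/- Let C and D be abelian categories, let π : C ⥤ D be an exact functor, and let u : D ⥤ C be a right adjoint of π which is fully faithful and exact. Then an object I of D is injective if and only if u(I) is an injective object of C. -/
open CategoryTheory Limits

/-- If `π : C ⥤ D` is exact with fully faithful exact right adjoint `u : D ⥤ C`, then an
object `I` of `D` is injective if and only if `u.obj I` is injective in `C`. -/
theorem injective_iff_injective_of_exact_fully_faithful_right_adjoint
    {C D : Type*} [Category C] [Category D] [Abelian C] [Abelian D]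
    (π : C ⥤ D) (u : D ⥤ C) (adj : π ⊣ u) [u.Full] [u.Faithful]
    [PreservesFiniteLimits π] [PreservesFiniteColimits π]
    [PreservesFiniteLimits u] [PreservesFiniteColimits u]
    (I : D) :
    Injective I ↔ Injective (u.obj I) := by
  constructor
  · intro hI
    constructor
    intro A B g f hf
    have : Mono (π.map f) := π.map_mono f
    obtain ⟨h, hh⟩ := hI.factors ((adj.homEquiv A I).symm g) (π.map f)
    refine ⟨adj.homEquiv B I h, ?_⟩
    have := (adj.homEquiv A I).symm_apply_eq.mpr
      ((adj.homEquiv_naturality_left f h).symm)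
    rw [hh] at this
    exact (adj.homEquiv A I).symm.injective this
  · intro hI
    constructor
    intro A B g f hf
    have : Mono (u.map f) := u.map_mono f
    obtain ⟨h, hh⟩ := hI.factors (u.map g) (u.map f)
    refine ⟨u.preimage h, ?_⟩
    apply u.map_injective
    rw [u.map_comp, u.map_preimage, hh]
end

section
/- Let A and B be abelian categories with enough injectives, let F : A ⥤ B be an exact functor with right adjoint G : B ⥤ A (so G is additive and left exact). Assume that for every object N of A the unit of adjunction N → G(F(N)) is an isomorphism, and that for every i ≥ 1 the i-th right derived functor of G vanishes on F(N), i.e., (R^i G)(F(N)) = 0. Fix a natural number d. If every object of B admits an injective resolution of length at most d, then every object of A admits an injective resolution of length at most d. -/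
open CategoryTheory Limits

/-- `M` admits an injective resolution of length at most `d`, i.e. an exact sequence
`0 → M → I⁰ → I¹ → ⋯ → I^d → 0` with every `I^j` injective.  We encode the sequence by
extending it by zero objects in degrees `> d`. -/
def HasInjectiveResolutionOfLength {C : Type*} [Category C] [Abelian C] (d : ℕ) (M : C) :
    Prop :=
  ∃ (I : ℕ → C) (ι : M ⟶ I 0) (δ : ∀ j : ℕ, I j ⟶ I (j + 1))
    (w0 : ι ≫ δ 0 = 0) (w : ∀ j : ℕ, δ j ≫ δ (j + 1) = 0),
    (∀ j : ℕ, j ≤ d → Injective (I j)) ∧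
    (∀ j : ℕ, d < j → IsZero (I j)) ∧
    Mono ι ∧
    (ShortComplex.mk ι (δ 0) w0).Exact ∧
    (∀ j : ℕ, (ShortComplex.mk (δ j) (δ (j + 1)) (w j)).Exact)

/-! Resolve `F M` by injectives `0 → F M → I⁰ → ⋯ → I^d → 0` and apply `G`. Each `G Iʲ` is
injective because the left adjoint `F` preserves monomorphisms; the resulting complex is exact at
`G I⁰` because `G` is left exact, and in degree `i ≥ 1` its cohomology is `Rⁱ G (F M) = 0`. So it
is an injective resolution of length `≤ d` of `G (F M)`, which the unit identifies with `M`. -/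

section

variable {C D : Type*} [Category C] [Category D] [Abelian C] [Abelian D]

namespace CochainComplex

lemma exactAt_of_succ_iff {X : ℕ → C} (d : ∀ n, X n ⟶ X (n + 1))
    (sq : ∀ n, d n ≫ d (n + 1) = 0) (n : ℕ) :
    (of X d sq).ExactAt (n + 1) ↔ (ShortComplex.mk (d n) (d (n + 1)) (sq n)).Exact := by
  rw [HomologicalComplex.exactAt_iff' _ n (n + 1) (n + 1 + 1) (by simp) (by simp)]
  simp only [HomologicalComplex.sc', HomologicalComplex.shortComplexFunctor', of_d]

lemma exactAt_map_of_succ_iff (G : C ⥤ D) [G.Additive] {X : ℕ → C}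
    (d : ∀ n, X n ⟶ X (n + 1)) (sq : ∀ n, d n ≫ d (n + 1) = 0) (n : ℕ) :
    ((G.mapHomologicalComplex _).obj (of X d sq)).ExactAt (n + 1) ↔
      (ShortComplex.mk (G.map (d n)) (G.map (d (n + 1)))
        (by rw [← G.map_comp, sq, G.map_zero])).Exact := by
  rw [HomologicalComplex.exactAt_iff' _ n (n + 1) (n + 1 + 1) (by simp) (by simp)]
  simp only [HomologicalComplex.sc', HomologicalComplex.shortComplexFunctor',
    Functor.mapHomologicalComplex_obj_d, of_d]
  exact Iff.rfl

end CochainComplex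

namespace CategoryTheory.InjectiveResolution

noncomputable def ofExact {Z : C} (I : ℕ → C) [∀ n, Injective (I n)] (ι : Z ⟶ I 0)
    (δ : ∀ n, I n ⟶ I (n + 1)) (w0 : ι ≫ δ 0 = 0) (w : ∀ n, δ n ≫ δ (n + 1) = 0) [Mono ι]
    (hex0 : (ShortComplex.mk ι (δ 0) w0).Exact)
    (hex : ∀ n, (ShortComplex.mk (δ n) (δ (n + 1)) (w n)).Exact) :
    InjectiveResolution Z where
  cocomplex := CochainComplex.of I δ w
  injective := inferInstance
  ι := (CochainComplex.fromSingle₀Equiv _ _).symm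
    ⟨ι, by rw [← w0]; exact congrArg (ι ≫ ·) (CochainComplex.of_d I δ 0)⟩
  quasiIso := ⟨fun n ↦ by
    cases n with
    | zero =>
      rw [CochainComplex.quasiIsoAt₀_iff, ShortComplex.quasiIso_iff_of_zeros _ rfl rfl rfl]
      refine (ShortComplex.exact_and_mono_f_iff_of_iso ?_).1 ⟨hex0, ‹_›⟩
      refine ShortComplex.isoMk (Iso.refl _) (Iso.refl _) (Iso.refl _) ?_ ?_
      · exact (Category.id_comp _).trans ((CochainComplex.fromSingle₀Equiv_symm_apply_f_zero
          (C := CochainComplex.of I δ w) ι _).trans (Category.comp_id ι).symm)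
      · exact (Category.id_comp _).trans
          ((CochainComplex.of_d I δ 0).trans (Category.comp_id (δ 0)).symm)
    | succ n =>
      rw [quasiIsoAt_iff_exactAt _ _ (CochainComplex.exactAt_succ_single_obj _ _),
        CochainComplex.exactAt_of_succ_iff]
      exact hex n⟩

lemma exactAt_map_cocomplex_succ_iff [EnoughInjectives C] {X : C} (R : InjectiveResolution X)
    (G : C ⥤ D) [G.Additive] (n : ℕ) :
    ((G.mapHomologicalComplex _).obj R.cocomplex).ExactAt (n + 1) ↔
      IsZero ((G.rightDerived (n + 1)).obj X) := by
  rw [HomologicalComplex.exactAt_iff_isZero_homology]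
  exact (R.isoRightDerivedObj G (n + 1)).isZero_iff.symm

end CategoryTheory.InjectiveResolution

namespace HasInjectiveResolutionOfLength

lemma of_iso {d : ℕ} {X Y : C} (e : X ≅ Y) (hY : HasInjectiveResolutionOfLength d Y) :
    HasInjectiveResolutionOfLength d X := by
  obtain ⟨I, ι, δ, w0, w, hinj, hzero, hmono, hex0, hex⟩ := hY
  refine ⟨I, e.hom ≫ ι, δ, by rw [Category.assoc, w0, comp_zero], w, hinj, hzero,
    mono_comp _ _, ?_, hex⟩
  refine (ShortComplex.exact_iff_of_iso ?_).1 hex0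
  exact ShortComplex.isoMk e.symm (Iso.refl _) (Iso.refl _) (by simp) (by simp)

lemma map [EnoughInjectives D] (G : D ⥤ C) [G.Additive] [PreservesFiniteLimits G]
    [G.PreservesInjectiveObjects] {d : ℕ} {X : D} (hX : HasInjectiveResolutionOfLength d X)
    (hG : ∀ n, IsZero ((G.rightDerived (n + 1)).obj X)) :
    HasInjectiveResolutionOfLength d (G.obj X) := by
  obtain ⟨I, ι, δ, w0, w, hinj, hzero, hmono, hex0, hex⟩ := hX
  have (n : ℕ) : Injective (I n) :=
    if hn : n ≤ d then hinj n hn else (hzero n (by omega)).injective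
  let R := InjectiveResolution.ofExact I ι δ w0 w hex0 hex
  refine ⟨fun n ↦ G.obj (I n), G.map ι, fun n ↦ G.map (δ n),
    by rw [← G.map_comp, w0, G.map_zero], fun n ↦ by rw [← G.map_comp, w n, G.map_zero],
    fun n hn ↦ G.injective_obj_of_injective (hinj n hn), fun n hn ↦ G.map_isZero (hzero n hn),
    inferInstance, hex0.map_of_mono_of_preservesKernel G hmono inferInstance, fun n ↦ ?_⟩
  exact (CochainComplex.exactAt_map_of_succ_iff G δ w n).1
    ((R.exactAt_map_cocomplex_succ_iff G n).2 (hG n))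

end HasInjectiveResolutionOfLength

end

theorem injDim_le_of_unit_iso_and_derived_vanishing_general
    {A B : Type*} [Category A] [Category B] [Abelian A] [Abelian B]
    [EnoughInjectives B]
    (F : A ⥤ B) (G : B ⥤ A) (adj : F ⊣ G)
    [PreservesFiniteLimits F] [G.Additive]
    (hunit : ∀ N : A, IsIso (adj.unit.app N))
    (hvanish : ∀ (N : A) (i : ℕ), 1 ≤ i → IsZero ((G.rightDerived i).obj (F.obj N)))
    (d : ℕ) (h : ∀ N : B, HasInjectiveResolutionOfLength d N) :
    ∀ M : A, HasInjectiveResolutionOfLength d M := by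
  intro M
  have := adj.rightAdjoint_preservesLimits
  have := Functor.preservesInjectiveObjects_of_adjunction_of_preservesMonomorphisms adj
  have := hunit M
  exact ((h (F.obj M)).map G fun n ↦ hvanish M (n + 1) (by omega)).of_iso
    (asIso (adj.unit.app M))

/-- Let `F : A ⥤ B` be exact with right adjoint `G`.  If the unit `N ⟶ G(F(N))` is always an
isomorphism and the higher right derived functors of `G` vanish on objects of the form
`F(N)`, then finite injective dimension `≤ d` descends from `B` to `A`. -/
theorem injDim_le_of_unit_iso_and_derived_vanishing
    {A B : Type*} [Category A] [Category B] [Abelian A] [Abelian B]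
    [EnoughInjectives A] [EnoughInjectives B]
    (F : A ⥤ B) (G : B ⥤ A) (adj : F ⊣ G)
    [PreservesFiniteLimits F] [PreservesFiniteColimits F] [G.Additive]
    (hunit : ∀ N : A, IsIso (adj.unit.app N))
    (hvanish : ∀ (N : A) (i : ℕ), 1 ≤ i → IsZero ((G.rightDerived i).obj (F.obj N)))
    (d : ℕ) (h : ∀ N : B, HasInjectiveResolutionOfLength d N) :
    ∀ M : A, HasInjectiveResolutionOfLength d M :=
  injDim_le_of_unit_iso_and_derived_vanishing_general F G adj hunit hvanish d h
end

section
/- Let p be a prime, R a commutative ring of characteristic p, M an R-module, and C : M → M an additive map satisfying C(r^p • m) = r • C(m) for all r ∈ R and m ∈ M (a Cartier module structure on M). Let 𝔞 ⊆ R be a finitely generated ideal and let m ∈ M satisfy 𝔞^n • m = 0 for some natural number n. Then there exists a natural number e such that for all r ∈ R and all a ∈ 𝔞 one has a • C^e(r • m) = 0, where C^e denotes the e-fold iterate of C. -/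
/-! The `e`-th iterate of a Cartier operator is `p^{-e}`-linear, so
`a • C^[e] x = C^[e] (a ^ p ^ e • x)`; for `e = n` the scalar `a ^ p ^ n` already lies in `𝔞 ^ n`. -/

namespace Function

variable {R M : Type*} {p : ℕ} {C : M → M}

theorem iterate_map_pow_pow_smul [Monoid R] [MulAction R M]
    (hC : ∀ (r : R) (m : M), C (r ^ p • m) = r • C m) (e : ℕ) (r : R) (m : M) :
    C^[e] (r ^ p ^ e • m) = r • C^[e] m := by
  induction e generalizing m with
  | zero => simp
  | succ e ih => rw [iterate_succ_apply, iterate_succ_apply, pow_succ, pow_mul, hC, ih]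

theorem iterate_map_zero_of_pow_smul [MonoidWithZero R] [Zero M] [MulActionWithZero R M]
    (hC : ∀ (r : R) (m : M), C (r ^ p • m) = r • C m) (e : ℕ) :
    C^[e] 0 = 0 := by
  conv_lhs => rw [← smul_zero ((0 : R) ^ p ^ e), iterate_map_pow_pow_smul hC, zero_smul]

end Function

open Function in
theorem exists_iterate_smul_mem_annihilated_general
    {p : ℕ} (hp : p.Prime) {R : Type*} [CommRing R]
    {M : Type*} [AddCommGroup M] [Module R M]
    (C : M → M)
    (hC : ∀ (r : R) (m : M), C (r ^ p • m) = r • C m)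
    (𝔞 : Ideal R) (m : M) (n : ℕ)
    (hm : ∀ a ∈ 𝔞 ^ n, a • m = 0) :
    ∃ e : ℕ, ∀ r : R, ∀ a ∈ 𝔞, a • C^[e] (r • m) = 0 := by
  refine ⟨n, fun r a ha => ?_⟩
  have hpow : a ^ p ^ n * r ∈ 𝔞 ^ n :=
    Ideal.mul_mem_right _ _
      (Ideal.pow_le_pow_right (Nat.lt_pow_self hp.one_lt).le (Ideal.pow_mem_pow ha _))
  rw [← iterate_map_pow_pow_smul hC, smul_smul, hm _ hpow, iterate_map_zero_of_pow_smul hC]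

/-- If `C` is a Cartier structure on the `R`-module `M` (i.e. `C` is additive and
`C (r^p • m) = r • C m`), `𝔞` is a finitely generated ideal and `𝔞^n • m = 0`, then some
iterate `C^e` kills `a • C^[e] (r • m)` for all `r ∈ R` and `a ∈ 𝔞`; i.e. the inclusion
`M[𝔞] ⊆ Γ_𝔞 M` is a nil-isomorphism of Cartier modules. -/
theorem exists_iterate_smul_mem_annihilated
    {p : ℕ} (hp : p.Prime) {R : Type*} [CommRing R] [CharP R p]
    {M : Type*} [AddCommGroup M] [Module R M]
    (C : M → M) (hadd : ∀ x y : M, C (x + y) = C x + C y)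
    (hC : ∀ (r : R) (m : M), C (r ^ p • m) = r • C m)
    (𝔞 : Ideal R) (hfg : 𝔞.FG) (m : M) (n : ℕ)
    (hm : ∀ a ∈ 𝔞 ^ n, a • m = 0) :
    ∃ e : ℕ, ∀ r : R, ∀ a ∈ 𝔞, a • C^[e] (r • m) = 0 :=
  exists_iterate_smul_mem_annihilated_general hp C hC 𝔞 m n hm
end

section
/- Let p be a prime, R a commutative ring of characteristic p, M an R-module, and C : M → M an additive map satisfying C(r^p • m) = r • C(m) for all r ∈ R and m ∈ M. For an element m ∈ M the following are equivalent: (i) there exists an R-submodule N of M with m ∈ N, C(N) ⊆ N, and C^n(N) = 0 for some natural number n (i.e., m lies in a nilpotent Cartier submodule of M); (ii) there exists a natural number e such that C^e(r • m) = 0 for all r ∈ R. -/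
/-!
The Cartier submodule generated by `m` is the `R`-span of the elements `C^k (r • m)`. These
elements are already stable under scalars, since `s • C^k x = C^k (s^(p^k) • x)`, so the span is
stable under `C`; and if `C^e` kills every `r • m`, it kills every `C^k (r • m)` and hence, by
additivity, the whole span.
-/

namespace Submodule

variable {R M N : Type*} [Semiring R] [AddCommMonoid M] [Module R M] [AddCommMonoid N]

theorem apply_mem_of_mem_span {F : Type*} [FunLike F M N] [AddMonoidHomClass F M N] (f : F)
    (T : AddSubmonoid N) {s : Set M} (h : ∀ (r : R), ∀ x ∈ s, f (r • x) ∈ T) {y : M}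
    (hy : y ∈ span R s) : f y ∈ T := by
  induction hy using closure_induction with
  | zero => exact (map_zero f).symm ▸ T.zero_mem
  | add x y _ _ hx hy => exact (map_add f x y).symm ▸ T.add_mem hx hy
  | smul_mem r x hx => exact h r x hx

end Submodule

namespace Cartier

variable {R M : Type*} [CommRing R] [AddCommGroup M] [Module R M] {p : ℕ} (C : AddMonoid.End M)

theorem smul_iterate_apply (hC : ∀ (r : R) (x : M), C (r ^ p • x) = r • C x) (k : ℕ) (r : R)
    (x : M) : r • C^[k] x = C^[k] (r ^ p ^ k • x) := by
  induction k generalizing r with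
  | zero => simp
  | succ k ih =>
    rw [Function.iterate_succ_apply', ← hC, ih, ← pow_mul, ← pow_succ',
      Function.iterate_succ_apply']

variable (R) in
def orbit (m : M) : Set M := {x | ∃ (k : ℕ) (r : R), C^[k] (r • m) = x}

variable (R) in
def span (m : M) : Submodule R M := Submodule.span R (orbit R C m)

theorem mem_span_self (m : M) : m ∈ span R C m :=
  Submodule.subset_span ⟨0, 1, by simp⟩

variable {C}

theorem smul_mem_orbit (hC : ∀ (r : R) (x : M), C (r ^ p • x) = r • C x) {m x : M}
    (hx : x ∈ orbit R C m) (s : R) : s • x ∈ orbit R C m := by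
  obtain ⟨k, r, rfl⟩ := hx
  exact ⟨k, s ^ p ^ k * r, by rw [smul_iterate_apply C hC, mul_smul]⟩

theorem apply_mem_span (hC : ∀ (r : R) (x : M), C (r ^ p • x) = r • C x) {m x : M}
    (hx : x ∈ span R C m) : C x ∈ span R C m := by
  refine Submodule.apply_mem_of_mem_span C (span R C m).toAddSubmonoid (fun s y hy => ?_) hx
  obtain ⟨k, r, hkr⟩ := smul_mem_orbit hC hy s
  exact Submodule.subset_span ⟨k + 1, r, by rw [Function.iterate_succ_apply', hkr]⟩

theorem iterate_eq_zero_of_mem_span (hC : ∀ (r : R) (x : M), C (r ^ p • x) = r • C x)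
    {m : M} {e : ℕ} (he : ∀ r : R, C^[e] (r • m) = 0) {x : M} (hx : x ∈ span R C m) :
    C^[e] x = 0 := by
  refine Submodule.apply_mem_of_mem_span (C ^ e) ⊥ (fun s y hy => ?_) hx
  obtain ⟨k, r, hkr⟩ := smul_mem_orbit hC hy s
  rw [AddSubmonoid.mem_bot, AddMonoid.End.coe_pow, ← hkr, ← Function.iterate_add_apply,
    add_comm, Function.iterate_add_apply, he, iterate_map_zero]

end Cartier

theorem mem_nilpotent_cartier_submodule_iff_general
    {p : ℕ} {R : Type*} [CommRing R]
    {M : Type*} [AddCommGroup M] [Module R M]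
    (C : M → M) (hadd : ∀ x y : M, C (x + y) = C x + C y)
    (hC : ∀ (r : R) (m : M), C (r ^ p • m) = r • C m)
    (m : M) :
    (∃ N : Submodule R M, m ∈ N ∧ (∀ x ∈ N, C x ∈ N) ∧ ∃ n : ℕ, ∀ x ∈ N, C^[n] x = 0) ↔
      (∃ e : ℕ, ∀ r : R, C^[e] (r • m) = 0) := by
  constructor
  · rintro ⟨N, hm, -, n, hn⟩
    exact ⟨n, fun r => hn _ (N.smul_mem r hm)⟩
  · rintro ⟨e, he⟩
    let C' : AddMonoid.End M := AddMonoidHom.mk' C hadd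
    exact ⟨Cartier.span R C' m, Cartier.mem_span_self C' m,
      fun _ => Cartier.apply_mem_span (C := C') hC,
      e, fun _ => Cartier.iterate_eq_zero_of_mem_span (C := C') hC he⟩

/-- An element `m` of a Cartier module `(M, C)` lies in a nilpotent Cartier submodule if and
only if some iterate `C^e` kills all the `r • m` for `r ∈ R`. -/
theorem mem_nilpotent_cartier_submodule_iff
    {p : ℕ} (hp : p.Prime) {R : Type*} [CommRing R] [CharP R p]
    {M : Type*} [AddCommGroup M] [Module R M]
    (C : M → M) (hadd : ∀ x y : M, C (x + y) = C x + C y)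
    (hC : ∀ (r : R) (m : M), C (r ^ p • m) = r • C m)
    (m : M) :
    (∃ N : Submodule R M, m ∈ N ∧ (∀ x ∈ N, C x ∈ N) ∧ ∃ n : ℕ, ∀ x ∈ N, C^[n] x = 0) ↔
      (∃ e : ℕ, ∀ r : R, C^[e] (r • m) = 0) :=
  mem_nilpotent_cartier_submodule_iff_general C hadd hC m
end

section
/- Let p be a prime, R a commutative ring of characteristic p, M an R-module, and C : M → M an additive map satisfying C(r^p • m) = r • C(m) for all r ∈ R and m ∈ M. Then the set N = {m ∈ M : there exists e ∈ ℕ with C^e(r • m) = 0 for all r ∈ R} is an R-submodule of M which is stable under C (i.e., C(N) ⊆ N), where C^e denotes the e-fold iterate of C. -/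
/-- The set of elements `m` of a Cartier module `(M, C)` such that some iterate `C^e` kills
all `r • m` is an `R`-submodule stable under `C` (the largest locally nilpotent Cartier
submodule). -/
theorem locallyNilpotent_is_cartier_submodule
    {p : ℕ} (hp : p.Prime) {R : Type*} [CommRing R] [CharP R p]
    {M : Type*} [AddCommGroup M] [Module R M]
    (C : M → M) (hadd : ∀ x y : M, C (x + y) = C x + C y)
    (hC : ∀ (r : R) (m : M), C (r ^ p • m) = r • C m) :
    ∃ N : Submodule R M,
      (∀ m : M, m ∈ N ↔ ∃ e : ℕ, ∀ r : R, C^[e] (r • m) = 0) ∧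
      (∀ x ∈ N, C x ∈ N) := by
  have hC0 : C 0 = 0 := by
    have := hadd 0 0
    simp only [add_zero] at this
    exact (left_eq_add.mp this)
  have hit0 : ∀ e : ℕ, C^[e] (0 : M) = 0 := by
    intro e
    induction e with
    | zero => rfl
    | succ n ih => rw [Function.iterate_succ_apply', ih, hC0]
  have hitadd : ∀ (e : ℕ) (x y : M), C^[e] (x + y) = C^[e] x + C^[e] y := by
    intro e
    induction e with
    | zero => intro x y; rfl
    | succ n ih =>
      intro x y
      rw [Function.iterate_succ_apply', ih, hadd, Function.iterate_succ_apply',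
        Function.iterate_succ_apply']
  have hmono : ∀ (e f : ℕ) (x : M), e ≤ f → C^[e] x = 0 → C^[f] x = 0 := by
    intro e f x hef h
    obtain ⟨k, rfl⟩ := Nat.exists_eq_add_of_le hef
    rw [add_comm, Function.iterate_add_apply, h, hit0]
  refine ⟨{
    carrier := {m | ∃ e : ℕ, ∀ r : R, C^[e] (r • m) = 0}
    zero_mem' := ⟨0, fun r => by simp⟩
    add_mem' := ?_
    smul_mem' := ?_ }, fun m => Iff.rfl, ?_⟩
  · rintro x y ⟨e, he⟩ ⟨f, hf⟩
    refine ⟨max e f, fun r => ?_⟩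
    rw [smul_add, hitadd, hmono e _ _ (le_max_left e f) (he r),
      hmono f _ _ (le_max_right e f) (hf r), add_zero]
  · rintro s x ⟨e, he⟩
    exact ⟨e, fun r => by rw [smul_comm, ← mul_smul]; exact he _⟩
  · rintro x ⟨e, he⟩
    refine ⟨e, fun r => ?_⟩
    rw [← hC r x, ← Function.iterate_succ_apply, Function.iterate_succ_apply',
      he (r ^ p), hC0]
end
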